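/- arXiv:1602.04951 — 2 statements merged into one kernel-verified Lean document; each statement's English description precedes it below -/
import Mathlib

section
/- For policies π (target) and μ (behavior), λ ∈ [0,1), and any Q-function Q, define the n-step corrected return operator R_n Q = r + ∑_{t=1}^{n} γ^t (P^μ)^{t−1} (P^μ r + P^π Q − P^μ Q) + γ^{n+1} (P^μ)^n P^π Q. Then the λ-average (1−λ) ∑_{n≥0} λ^n R_n Q equals Q + ∑_{t≥0} (λγ)^t (P^μ)^t (T^π Q − Q), where both series converge. -/
open scoped BigOperators

noncomputable section

/-- The operator `P^π` on Q-functions. -/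
def Pop {X A : Type*} [Fintype X] [Fintype A] (P : X → A → X → ℝ) (π : X → A → ℝ)
    (Q : X × A → ℝ) : X × A → ℝ :=
  fun p => ∑ y : X, ∑ b : A, P p.1 p.2 y * π y b * Q (y, b)

/-- The Bellman operator `T^π Q = r + γ P^π Q`. -/
def Tpol {X A : Type*} [Fintype X] [Fintype A] (P : X → A → X → ℝ) (π : X → A → ℝ)
    (γ : ℝ) (r : X × A → ℝ) (Q : X × A → ℝ) : X × A → ℝ :=
  r + γ • Pop P π Q

/-- The n-step off-policy corrected return operator
`R_n Q = r + ∑_{t=1}^{n} γ^t (P^μ)^{t−1} (P^μ r + P^π Q − P^μ Q) + γ^{n+1} (P^μ)^n P^π Q`. -/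
def Rn {X A : Type*} [Fintype X] [Fintype A] (P : X → A → X → ℝ) (π μ : X → A → ℝ)
    (γ : ℝ) (r : X × A → ℝ) (n : ℕ) (Q : X × A → ℝ) : X × A → ℝ :=
  r + ∑ t ∈ Finset.Icc 1 n,
      γ ^ t • (Pop P μ)^[t - 1] (Pop P μ r + Pop P π Q - Pop P μ Q)
    + γ ^ (n + 1) • (Pop P μ)^[n] (Pop P π Q)

/-!
Consecutive corrected returns differ by `γ^(n+1) (P^μ)^(n+1) (T^π Q - Q)` and `R_0 Q = T^π Q`, so
`R_n Q` is `Q` plus the `n`-th partial sum of the series `∑ γ^t (P^μ)^t (T^π Q - Q)`. That series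
converges absolutely because `P^μ` is a contraction for the sup norm, and by Abel summation the
`(1 - λ) λ^n`-weighted average of the partial sums of an absolutely summable series `∑ a_t` is
`∑ λ^t a_t`.
-/

open Finset

section Operator

variable {X A : Type*} [Fintype X] [Fintype A] (P : X → A → X → ℝ) (π : X → A → ℝ)

def popLinear : Module.End ℝ (X × A → ℝ) where
  toFun := Pop P π
  map_add' f g := by ext p; simp only [Pop, Pi.add_apply, mul_add, sum_add_distrib]
  map_smul' c f := by
    ext p
    simp only [Pop, Pi.smul_apply, smul_eq_mul, mul_sum, RingHom.id_apply]
    exact sum_congr rfl fun _ _ => sum_congr rfl fun _ _ => by ring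

theorem popLinear_apply (f : X × A → ℝ) : popLinear P π f = Pop P π f := rfl

theorem coe_popLinear_pow (n : ℕ) : ⇑(popLinear P π ^ n) = (Pop P π)^[n] :=
  Module.End.coe_pow _ n

variable {P π}

theorem norm_Pop_le (hP0 : ∀ x a y, 0 ≤ P x a y) (hP1 : ∀ x a, ∑ y : X, P x a y = 1)
    (hπ0 : ∀ x a, 0 ≤ π x a) (hπ1 : ∀ x, ∑ a : A, π x a = 1) (f : X × A → ℝ) :
    ‖Pop P π f‖ ≤ ‖f‖ := by
  refine (pi_norm_le_iff_of_nonneg (norm_nonneg f)).2 fun p => ?_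
  have hw : ∀ y b, 0 ≤ P p.1 p.2 y * π y b := fun y b => mul_nonneg (hP0 _ _ _) (hπ0 _ _)
  calc ‖Pop P π f p‖
      ≤ ∑ y : X, ∑ b : A, ‖P p.1 p.2 y * π y b * f (y, b)‖ :=
        (norm_sum_le _ _).trans (sum_le_sum fun y _ => norm_sum_le _ _)
    _ ≤ ∑ y : X, ∑ b : A, P p.1 p.2 y * π y b * ‖f‖ := by
        gcongr with y _ b _
        rw [norm_mul, Real.norm_of_nonneg (hw y b)]
        exact mul_le_mul_of_nonneg_left (norm_le_pi_norm f (y, b)) (hw y b)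
    _ = ‖f‖ := by simp only [← sum_mul, ← mul_sum, hπ1, mul_one, hP1, one_mul]

theorem norm_iterate_Pop_le (hP0 : ∀ x a y, 0 ≤ P x a y) (hP1 : ∀ x a, ∑ y : X, P x a y = 1)
    (hπ0 : ∀ x a, 0 ≤ π x a) (hπ1 : ∀ x, ∑ a : A, π x a = 1) (n : ℕ) (f : X × A → ℝ) :
    ‖(Pop P π)^[n] f‖ ≤ ‖f‖ := by
  induction n with
  | zero => rfl
  | succ n ih =>
    rw [Function.iterate_succ_apply']
    exact (norm_Pop_le hP0 hP1 hπ0 hπ1 _).trans ih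

end Operator

section CorrectedReturn

variable {X A : Type*} [Fintype X] [Fintype A] (P : X → A → X → ℝ) (π μ : X → A → ℝ) (γ : ℝ)
  (r Q : X × A → ℝ)

theorem Rn_zero : Rn P π μ γ r 0 Q = Tpol P π γ r Q := by
  simp [Rn, Tpol]

theorem Rn_succ (n : ℕ) :
    Rn P π μ γ r (n + 1) Q =
      Rn P π μ γ r n Q + γ ^ (n + 1) • (Pop P μ)^[n + 1] (Tpol P π γ r Q - Q) := by
  rw [Rn, Rn, sum_Icc_succ_top (Nat.le_add_left 1 n), Nat.add_sub_cancel, Tpol]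
  simp only [← coe_popLinear_pow, pow_succ (popLinear P μ) n, Module.End.mul_apply,
    ← popLinear_apply, map_add, map_sub, map_smul]
  module

theorem Rn_eq_add_sum_range (n : ℕ) :
    Rn P π μ γ r n Q =
      Q + ∑ t ∈ range (n + 1), γ ^ t • (Pop P μ)^[t] (Tpol P π γ r Q - Q) := by
  induction n with
  | zero => simp [Rn_zero]
  | succ n ih => rw [Rn_succ, ih, sum_range_succ _ (n + 1), add_assoc]

end CorrectedReturn

section GeometricAverage

variable {E : Type*} [NormedAddCommGroup E] [NormedSpace ℝ E] [CompleteSpace E] {l : ℝ}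

theorem summable_pow_smul_of_summable_norm (hl0 : 0 ≤ l) (hl1 : l ≤ 1) {a : ℕ → E}
    (ha : Summable (‖a ·‖)) : Summable (fun t => l ^ t • a t) :=
  .of_norm_bounded ha fun t => by
    rw [norm_smul, norm_pow, Real.norm_of_nonneg hl0]
    exact mul_le_of_le_one_left (norm_nonneg _) (pow_le_one₀ hl0 hl1)

theorem hasSum_geometric_smul_sum_range (hl0 : 0 ≤ l) (hl1 : l < 1)
    {a : ℕ → E} (ha : Summable (‖a ·‖)) :
    HasSum (fun n => ((1 - l) * l ^ n) • ∑ t ∈ range (n + 1), a t) (∑' t, l ^ t • a t) := by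
  set S : ℕ → E := fun n => ∑ t ∈ range (n + 1), a t
  set u : ℕ → E := fun n => l ^ n • S n
  have hu : Summable u := by
    refine .of_norm_bounded ((summable_geometric_of_lt_one hl0 hl1).mul_right (∑' t, ‖a t‖))
      fun n => ?_
    rw [norm_smul, norm_pow, Real.norm_of_nonneg hl0]
    have hS : ‖S n‖ ≤ ∑' t, ‖a t‖ :=
      (norm_sum_le _ _).trans (ha.sum_le_tsum _ fun _ _ => norm_nonneg _)
    exact mul_le_mul_of_nonneg_left hS (pow_nonneg hl0 n)
  -- Abel summation: `l ^ (t + 1) • a (t + 1) = u (t + 1) - l • u t`.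
  have hsum : ∑' t, l ^ t • a t = (1 - l) • ∑' n, u n := by
    calc ∑' t, l ^ t • a t = u 0 + ∑' t, (u (t + 1) - l • u t) := by
          rw [(summable_pow_smul_of_summable_norm hl0 hl1.le ha).tsum_eq_zero_add]
          congr 1
          · simp [u, S]
          · refine tsum_congr fun t => ?_
            simp only [u, S, sum_range_succ _ (t + 1), pow_succ, mul_smul, smul_add]
            module
      _ = (1 - l) • ∑' n, u n := by
          rw [(summable_nat_add_iff 1).2 hu |>.tsum_sub (hu.const_smul l), hu.tsum_const_smul,
            hu.tsum_eq_zero_add]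
          module
  simpa only [hsum, mul_smul] using hu.hasSum.const_smul (1 - l)

end GeometricAverage

theorem stmt3_general {X A : Type*} [Fintype X] [Fintype A]
    (P : X → A → X → ℝ)
    (hP0 : ∀ x a y, 0 ≤ P x a y) (hP1 : ∀ x a, ∑ y : X, P x a y = 1)
    (π μ : X → A → ℝ)
    (hμ0 : ∀ x a, 0 ≤ μ x a) (hμ1 : ∀ x, ∑ a : A, μ x a = 1)
    (γ : ℝ) (hγ0 : 0 ≤ γ) (hγ1 : γ < 1)
    (lam : ℝ) (hl0 : 0 ≤ lam) (hl1 : lam < 1)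
    (r : X × A → ℝ) (Q : X × A → ℝ) :
    Summable (fun n : ℕ => ((1 - lam) * lam ^ n) • Rn P π μ γ r n Q) ∧
    Summable (fun t : ℕ => (lam * γ) ^ t • (Pop P μ)^[t] (Tpol P π γ r Q - Q)) ∧
    ∑' n : ℕ, ((1 - lam) * lam ^ n) • Rn P π μ γ r n Q =
      Q + ∑' t : ℕ, (lam * γ) ^ t • (Pop P μ)^[t] (Tpol P π γ r Q - Q) := by
  have hterm : Summable (fun t => ‖γ ^ t • (Pop P μ)^[t] (Tpol P π γ r Q - Q)‖) := by
    refine .of_nonneg_of_le (fun _ => norm_nonneg _) (fun t => ?_)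
      ((summable_geometric_of_lt_one hγ0 hγ1).mul_right ‖Tpol P π γ r Q - Q‖)
    rw [norm_smul, norm_pow, Real.norm_of_nonneg hγ0]
    exact mul_le_mul_of_nonneg_left (norm_iterate_Pop_le hP0 hP1 hμ0 hμ1 t _) (pow_nonneg hγ0 t)
  have hQ : HasSum (fun n => ((1 - lam) * lam ^ n) • Q) Q := by
    simpa [mul_inv_cancel₀ (sub_ne_zero.2 hl1.ne')] using
      ((hasSum_geometric_of_lt_one hl0 hl1).mul_left (1 - lam)).smul_const Q
  have hR : HasSum (fun n => ((1 - lam) * lam ^ n) • Rn P π μ γ r n Q)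
      (Q + ∑' t, (lam * γ) ^ t • (Pop P μ)^[t] (Tpol P π γ r Q - Q)) := by
    simpa only [Rn_eq_add_sum_range, smul_add, smul_smul, ← mul_pow] using
      hQ.add (hasSum_geometric_smul_sum_range hl0 hl1 hterm)
  refine ⟨hR.summable, ?_, hR.tsum_eq⟩
  simpa only [smul_smul, ← mul_pow] using summable_pow_smul_of_summable_norm hl0 hl1.le hterm

/-- `(1−λ) ∑_{n≥0} λ^n R_n Q = Q + ∑_{t≥0} (λγ)^t (P^μ)^t (T^π Q − Q)`,
both series converging. -/
theorem stmt3 {X A : Type*} [Fintype X] [Fintype A] [Nonempty X] [Nonempty A]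
    (P : X → A → X → ℝ)
    (hP0 : ∀ x a y, 0 ≤ P x a y) (hP1 : ∀ x a, ∑ y : X, P x a y = 1)
    (π μ : X → A → ℝ)
    (hπ0 : ∀ x a, 0 ≤ π x a) (hπ1 : ∀ x, ∑ a : A, π x a = 1)
    (hμ0 : ∀ x a, 0 ≤ μ x a) (hμ1 : ∀ x, ∑ a : A, μ x a = 1)
    (γ : ℝ) (hγ0 : 0 ≤ γ) (hγ1 : γ < 1)
    (lam : ℝ) (hl0 : 0 ≤ lam) (hl1 : lam < 1)
    (r : X × A → ℝ) (Q : X × A → ℝ) :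
    Summable (fun n : ℕ => ((1 - lam) * lam ^ n) • Rn P π μ γ r n Q) ∧
    Summable (fun t : ℕ => (lam * γ) ^ t • (Pop P μ)^[t] (Tpol P π γ r Q - Q)) ∧
    ∑' n : ℕ, ((1 - lam) * lam ^ n) • Rn P π μ γ r n Q =
      Q + ∑' t : ℕ, (lam * γ) ^ t • (Pop P μ)^[t] (Tpol P π γ r Q - Q) :=
  stmt3_general P hP0 hP1 π μ hμ0 hμ1 γ hγ0 hγ1 lam hl0 hl1 r Q
end
end

section
/- (Proposition 1, fixed-point characterization.) For policies π and μ, λ ∈ [0,1), define the General Q(λ) operator R Q := ∑_{t≥0} (λγ)^t (P^μ)^t [ r + (1−λ) γ P^π Q ]. Then a Q-function Q satisfies R Q = Q if and only if Q = (1−λ) T^π Q + λ T^μ Q, i.e. Q is a fixed point of the mixed Bellman operator (1−λ)T^π + λT^μ. -/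
open scoped BigOperators

noncomputable section

/-- The General Q(λ) operator `R Q = ∑_{t≥0} (λγ)^t (P^μ)^t [ r + (1−λ) γ P^π Q ]`. -/
def Rgen {X A : Type*} [Fintype X] [Fintype A] (P : X → A → X → ℝ) (π μ : X → A → ℝ)
    (γ lam : ℝ) (r : X × A → ℝ) (Q : X × A → ℝ) : X × A → ℝ :=
  ∑' t : ℕ, (lam * γ) ^ t • (Pop P μ)^[t] (r + ((1 - lam) * γ) • Pop P π Q)

/-!
Write `c = λγ` and `G = r + (1 − λ)γ P^π Q`. Expanding the Bellman operators, the mixed operator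
sends `Q` to `G + c P^μ Q`, while `R Q` is the Neumann series `∑ₜ (c P^μ)^t G`. A stochastic
`P^μ` is a sup-norm contraction, so `‖c P^μ‖ ≤ λγ < 1` and the series equals `(1 − c P^μ)⁻¹ G`;
hence `R Q = Q` iff `Q − c P^μ Q = G`.
-/

theorem ContinuousLinearMap.tsum_pow_apply_eq_iff {𝕜 E : Type*} [NontriviallyNormedField 𝕜]
    [NormedAddCommGroup E] [NormedSpace 𝕜 E] [CompleteSpace E] {T : E →L[𝕜] E} (hT : ‖T‖ < 1)
    (g q : E) : ∑' t : ℕ, (T ^ t) g = q ↔ q = g + T q := by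
  set S := ∑' t : ℕ, T ^ t
  have hS : ∑' t : ℕ, (T ^ t) g = S g :=
    ((summable_geometric_of_norm_lt_one hT).map_tsum _ (apply 𝕜 E g).continuous).symm
  have hleft (x : E) : S (x - T x) = x := congr($(geom_series_mul_neg T hT) x)
  have hright (x : E) : S x - T (S x) = x := congr($(mul_neg_geom_series T hT) x)
  rw [hS]
  constructor
  · rintro rfl
    exact sub_eq_iff_eq_add.mp (hright g)
  · intro hq
    rw [← sub_eq_iff_eq_add.mpr hq, hleft]

section Stochastic

variable {X A : Type*} [Fintype X] [Fintype A] {P : X → A → X → ℝ} {μ : X → A → ℝ}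

theorem norm_pop_le (hP0 : ∀ x a y, 0 ≤ P x a y) (hP1 : ∀ x a, ∑ y : X, P x a y = 1)
    (hμ0 : ∀ x a, 0 ≤ μ x a) (hμ1 : ∀ x, ∑ a : A, μ x a = 1) (Q : X × A → ℝ) :
    ‖Pop P μ Q‖ ≤ ‖Q‖ := by
  refine (pi_norm_le_iff_of_nonneg (norm_nonneg Q)).mpr fun p => ?_
  have hw (y : X) (b : A) : 0 ≤ P p.1 p.2 y * μ y b := mul_nonneg (hP0 _ _ _) (hμ0 _ _)
  calc ‖Pop P μ Q p‖ ≤ ∑ y : X, ∑ b : A, P p.1 p.2 y * μ y b * ‖Q‖ := by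
        refine (norm_sum_le _ _).trans (Finset.sum_le_sum fun y _ => (norm_sum_le _ _).trans
          (Finset.sum_le_sum fun b _ => ?_))
        rw [norm_mul, Real.norm_of_nonneg (hw y b)]
        exact mul_le_mul_of_nonneg_left (norm_le_pi_norm Q (y, b)) (hw y b)
    _ = ‖Q‖ := by simp only [← Finset.sum_mul, ← Finset.mul_sum, hμ1, mul_one, hP1, one_mul]

variable (P μ) in
def popCLM : (X × A → ℝ) →L[ℝ] X × A → ℝ :=
  LinearMap.toContinuousLinearMap
    { toFun := Pop P μ
      map_add' := fun f g => by
        ext p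
        simp only [Pop, Pi.add_apply, mul_add, Finset.sum_add_distrib]
      map_smul' := fun c f => by
        ext p
        simp only [Pop, Pi.smul_apply, smul_eq_mul, RingHom.id_apply, Finset.mul_sum]
        exact Finset.sum_congr rfl fun _ _ => Finset.sum_congr rfl fun _ _ => by ring }

@[simp]
theorem popCLM_apply (Q : X × A → ℝ) : popCLM P μ Q = Pop P μ Q := rfl

theorem norm_popCLM_le (hP0 : ∀ x a y, 0 ≤ P x a y) (hP1 : ∀ x a, ∑ y : X, P x a y = 1)
    (hμ0 : ∀ x a, 0 ≤ μ x a) (hμ1 : ∀ x, ∑ a : A, μ x a = 1) : ‖popCLM P μ‖ ≤ 1 :=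
  ContinuousLinearMap.opNorm_le_bound _ zero_le_one fun Q => by
    rw [popCLM_apply, one_mul]
    exact norm_pop_le hP0 hP1 hμ0 hμ1 Q

end Stochastic

theorem stmt16_general {X A : Type*} [Fintype X] [Fintype A]
    (P : X → A → X → ℝ)
    (hP0 : ∀ x a y, 0 ≤ P x a y) (hP1 : ∀ x a, ∑ y : X, P x a y = 1)
    (π μ : X → A → ℝ)
    (hμ0 : ∀ x a, 0 ≤ μ x a) (hμ1 : ∀ x, ∑ a : A, μ x a = 1)
    (γ : ℝ) (hγ0 : 0 ≤ γ) (hγ1 : γ < 1)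
    (lam : ℝ) (hl0 : 0 ≤ lam) (hl1 : lam < 1)
    (r : X × A → ℝ) (Q : X × A → ℝ) :
    Rgen P π μ γ lam r Q = Q ↔
      Q = (1 - lam) • Tpol P π γ r Q + lam • Tpol P μ γ r Q := by
  set T := (lam * γ) • popCLM P μ
  set G := r + ((1 - lam) * γ) • Pop P π Q
  have hT : ‖T‖ < 1 := calc
    ‖T‖ ≤ ‖lam * γ‖ * ‖popCLM P μ‖ := norm_smul_le (lam * γ) (popCLM P μ)
    _ ≤ lam * γ * 1 := by
      rw [Real.norm_of_nonneg (mul_nonneg hl0 hγ0)]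
      exact mul_le_mul_of_nonneg_left (norm_popCLM_le hP0 hP1 hμ0 hμ1) (mul_nonneg hl0 hγ0)
    _ < 1 := by nlinarith
  have hR : Rgen P π μ γ lam r Q = ∑' t : ℕ, (T ^ t) G := by
    simp only [Rgen, T, smul_pow, smul_apply, FunLike.coe_pow_eq_iterate]
    rfl
  have hmix : (1 - lam) • Tpol P π γ r Q + lam • Tpol P μ γ r Q = G + T Q := by
    simp only [Tpol, G, T, smul_apply, popCLM_apply]
    module
  rw [hR, hmix]
  exact ContinuousLinearMap.tsum_pow_apply_eq_iff hT G Q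

/-- Proposition 1, fixed-point characterization: `R Q = Q` iff
`Q = (1−λ) T^π Q + λ T^μ Q`. -/
theorem stmt16 {X A : Type*} [Fintype X] [Fintype A] [Nonempty X] [Nonempty A]
    (P : X → A → X → ℝ)
    (hP0 : ∀ x a y, 0 ≤ P x a y) (hP1 : ∀ x a, ∑ y : X, P x a y = 1)
    (π μ : X → A → ℝ)
    (hπ0 : ∀ x a, 0 ≤ π x a) (hπ1 : ∀ x, ∑ a : A, π x a = 1)
    (hμ0 : ∀ x a, 0 ≤ μ x a) (hμ1 : ∀ x, ∑ a : A, μ x a = 1)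
    (γ : ℝ) (hγ0 : 0 ≤ γ) (hγ1 : γ < 1)
    (lam : ℝ) (hl0 : 0 ≤ lam) (hl1 : lam < 1)
    (r : X × A → ℝ) (Q : X × A → ℝ) :
    Rgen P π μ γ lam r Q = Q ↔
      Q = (1 - lam) • Tpol P π γ r Q + lam • Tpol P μ γ r Q :=
  stmt16_general P hP0 hP1 π μ hμ0 hμ1 γ hγ0 hγ1 lam hl0 hl1 r Q
end
end
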